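/- arXiv:1604.00960 — 3 statements merged into one kernel-verified Lean document; each statement's English description precedes it below -/
import Mathlib

section
/- For every integer m ≥ 3 there exist pairwise interior-disjoint convex bodies Z₁, …, Zₘ in the plane ℝ² such that the complement ℝ² \ (Z₁ ∪ ⋯ ∪ Zₘ) has exactly 2m − 4 connected components. -/
/-- A convex body in the plane: a compact convex subset of ℝ² with nonempty interior. -/
def IsConvexBody (S : Set (ℝ × ℝ)) : Prop :=
  IsCompact S ∧ Convex ℝ S ∧ (interior S).Nonempty

/-!
Two triangular jaws `jaw n (±1)` touch at `(-1, 0)` and bound the wedge `|y| < x + 1`. Inside the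
wedge sit the rhombic teeth `tooth 0, …, tooth n`, where `tooth j` has vertices `(2j, 0)`,
`(2j + 1, ±(2j + 2))` and `(2j + 2, 0)`: consecutive teeth touch on the `x`-axis and every tooth
touches both jaws. With `m = n + 3` bodies, the complement consists of the unbounded region, the
hole to the left of `tooth 0`, and an upper and a lower hole between each pair of consecutive
teeth, `2n + 2 = 2m - 4` regions in all. Each region is open and connected (convex, or a chain of
convex sets each meeting the next), and they are pairwise disjoint, so they are exactly the
connected components of the complement.
-/

open Set Function

section Components

variable {X ι : Type*} {V : ι → Set X}

theorem injective_of_pairwise_disjoint (hdisj : Pairwise (Disjoint on V))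
    (hne : ∀ i, (V i).Nonempty) : Injective V := by
  intro i j hij
  by_contra h
  obtain ⟨x, hx⟩ := hne i
  exact (hdisj h).notMem_of_mem_left hx (hij ▸ hx)

variable [TopologicalSpace X]

theorem connectedComponentIn_iUnion_eq (hV : ∀ i, IsOpen (V i))
    (hdisj : Pairwise (Disjoint on V)) {i : ι} (hVi : IsPreconnected (V i)) {x : X}
    (hx : x ∈ V i) : connectedComponentIn (⋃ j, V j) x = V i := by
  refine subset_antisymm ?_ (hVi.subset_connectedComponentIn hx (subset_iUnion V i))
  have hcover : ⋃ j, V j ⊆ V i ∪ ⋃ (j) (_ : j ≠ i), V j := by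
    refine iUnion_subset fun j => ?_
    by_cases hj : j = i
    · exact hj ▸ subset_union_left
    · exact (subset_iUnion₂ (s := fun j (_ : j ≠ i) => V j) j hj).trans subset_union_right
  exact isPreconnected_connectedComponentIn.subset_left_of_subset_union (hV i)
    (isOpen_iUnion fun j => isOpen_iUnion fun _ => hV j)
    (disjoint_iUnion₂_right.2 fun _ hj => hdisj (Ne.symm hj))
    ((connectedComponentIn_subset _ _).trans hcover)
    ⟨x, mem_connectedComponentIn (mem_iUnion_of_mem i hx), hx⟩

theorem finite_and_ncard_setOf_connectedComponentIn_iUnion [Finite ι]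
    (hV : ∀ i, IsOpen (V i)) (hconn : ∀ i, IsPreconnected (V i)) (hne : ∀ i, (V i).Nonempty)
    (hdisj : Pairwise (Disjoint on V)) :
    {H | ∃ x ∈ ⋃ i, V i, H = connectedComponentIn (⋃ i, V i) x}.Finite ∧
      {H | ∃ x ∈ ⋃ i, V i, H = connectedComponentIn (⋃ i, V i) x}.ncard = Nat.card ι := by
  have hrange : {H | ∃ x ∈ ⋃ i, V i, H = connectedComponentIn (⋃ i, V i) x} = range V := by
    ext H
    constructor
    · rintro ⟨x, hx, rfl⟩
      obtain ⟨i, hi⟩ := mem_iUnion.1 hx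
      exact ⟨i, (connectedComponentIn_iUnion_eq hV hdisj (hconn i) hi).symm⟩
    · rintro ⟨i, rfl⟩
      obtain ⟨x, hx⟩ := hne i
      exact ⟨x, mem_iUnion_of_mem i hx, (connectedComponentIn_iUnion_eq hV hdisj (hconn i) hx).symm⟩
  rw [hrange]
  exact ⟨finite_range V, ncard_range_of_injective (injective_of_pairwise_disjoint hdisj hne)⟩

end Components

theorem disjoint_interior_of_subset_le_of_subset_ge {E : Type*} [NormedAddCommGroup E]
    [NormedSpace ℝ E] [CompleteSpace E] {f : E →L[ℝ] ℝ} (hf : Surjective f) {S T : Set E} {c : ℝ}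
    (hS : S ⊆ {x | f x ≤ c}) (hT : T ⊆ {x | c ≤ f x}) : Disjoint (interior S) (interior T) := by
  have hint : ∀ U : Set ℝ, interior (f ⁻¹' U) = f ⁻¹' interior U := fun U =>
    ((f.isOpenMap hf).preimage_interior_eq_interior_preimage f.continuous U).symm
  refine Disjoint.mono (interior_mono hS) (interior_mono hT) ?_
  change Disjoint (interior (f ⁻¹' Iic c)) (interior (f ⁻¹' Ici c))
  rw [hint, hint, interior_Iic, interior_Ici]
  exact ((Iio_disjoint_Ici le_rfl).mono_right Ioi_subset_Ici_self).preimage f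

theorem isPreconnected_compl_Icc_prod_Icc (a b c d : ℝ) : IsPreconnected (Icc a b ×ˢ Icc c d)ᶜ := by
  have h : (Icc a b ×ˢ Icc c d)ᶜ =
      ((Iio a ×ˢ univ ∪ univ ×ˢ Iio c) ∪ Ioi b ×ˢ univ) ∪ univ ×ˢ Ioi d := by
    ext p
    simp only [mem_compl_iff, mem_prod, mem_Icc, mem_union, mem_Iio, mem_Ioi, mem_univ, and_true,
      true_and, not_and_or, not_le]
    tauto
  rw [h]
  refine IsPreconnected.union (b + 1, d + 1) (by simp) (by simp) ?_
    (isPreconnected_univ.prod isPreconnected_Ioi)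
  refine IsPreconnected.union (b + 1, c - 1) (by simp) (by simp) ?_
    (isPreconnected_Ioi.prod isPreconnected_univ)
  exact IsPreconnected.union (a - 1, c - 1) (by simp) (by simp)
    (isPreconnected_Iio.prod isPreconnected_univ) (isPreconnected_univ.prod isPreconnected_Iio)

theorem mul_le_abs_of_abs_eq_one {s : ℝ} (hs : |s| = 1) (y : ℝ) : s * y ≤ |y| := by
  simpa [abs_mul, hs] using le_abs_self (s * y)

theorem convex_setOf_lt_mul_snd {f : ℝ → ℝ}
    (hf : ∀ x y t : ℝ, f ((1 - t) * x + t * y) = (1 - t) * f x + t * f y) (s : ℝ) :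
    Convex ℝ {p : ℝ × ℝ | f p.1 < s * p.2} := by
  intro p (hp : f p.1 < s * p.2) q (hq : f q.1 < s * q.2) u v hu hv huv
  have h := convex_Ioi (0 : ℝ) (sub_pos.2 hp) (sub_pos.2 hq) hu hv huv
  obtain rfl : u = 1 - v := by linarith
  simp only [mem_Ioi, smul_eq_mul] at h
  show f ((1 - v) * p.1 + v * q.1) < s * ((1 - v) * p.2 + v * q.2)
  rw [hf]
  linarith

theorem convex_setOf_abs_snd_le {g : ℝ → ℝ}
    (hg : ∀ x y t : ℝ, g ((1 - t) * x + t * y) = (1 - t) * g x + t * g y) :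
    Convex ℝ {p : ℝ × ℝ | |p.2| ≤ g p.1} := by
  intro p (hp : |p.2| ≤ g p.1) q (hq : |q.2| ≤ g q.1) u v hu hv huv
  obtain rfl : u = 1 - v := by linarith
  show |(1 - v) * p.2 + v * q.2| ≤ g ((1 - v) * p.1 + v * q.1)
  rw [hg]
  calc |(1 - v) * p.2 + v * q.2| ≤ (1 - v) * |p.2| + v * |q.2| := by
        simpa [abs_mul, abs_of_nonneg hu, abs_of_nonneg hv] using
          abs_add_le ((1 - v) * p.2) (v * q.2)
    _ ≤ (1 - v) * g p.1 + v * g q.1 := by gcongr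

namespace ConvexHoles

/-- `jaw n 1` and `jaw n (-1)` are the triangles with vertices `(-1, 0)`, `(-1, ±(2n + 3))` and
`(2n + 2, ±(2n + 3))`. -/
def jaw (n : ℕ) (s : ℝ) : Set (ℝ × ℝ) := {p | -1 ≤ p.1 ∧ p.1 + 1 ≤ s * p.2 ∧ s * p.2 ≤ 2 * n + 3}

/-- The left edges of `tooth j` lie on the lines `|y| = leftEdge j x`, its right edges on
`|y| = rightEdge j x`. -/
def leftEdge (j : ℕ) (x : ℝ) : ℝ := (2 * j + 2) * (x - 2 * j)

def rightEdge (j : ℕ) (x : ℝ) : ℝ := (2 * j + 2) * (2 * j + 2 - x)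

def tooth (j : ℕ) : Set (ℝ × ℝ) := {p | |p.2| ≤ leftEdge j p.1 ∧ |p.2| ≤ rightEdge j p.1}

def body (n : ℕ) : ℕ → Set (ℝ × ℝ)
  | 0 => jaw n 1
  | 1 => jaw n (-1)
  | j + 2 => tooth j

def wedge : Set (ℝ × ℝ) := {p | |p.2| < p.1 + 1}

/-- For `s = 1` (resp. `s = -1`): the open half-plane above (resp. below) the line carrying the
upper (resp. lower) left edge of `tooth j`. -/
def beyondLeftEdge (j : ℕ) (s : ℝ) : Set (ℝ × ℝ) := {p | leftEdge j p.1 < s * p.2}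

def beyondRightEdge (j : ℕ) (s : ℝ) : Set (ℝ × ℝ) := {p | rightEdge j p.1 < s * p.2}

def leftHole : Set (ℝ × ℝ) := wedge ∩ (beyondLeftEdge 0 1 ∪ beyondLeftEdge 0 (-1))

def gap (j : ℕ) (s : ℝ) : Set (ℝ × ℝ) := wedge ∩ beyondRightEdge j s ∩ beyondLeftEdge (j + 1) s

def box (n : ℕ) : Set (ℝ × ℝ) := Icc (-1 : ℝ) (2 * n + 2) ×ˢ Icc (-(2 * n + 3) : ℝ) (2 * n + 3)

def outside (n : ℕ) : Set (ℝ × ℝ) :=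
  (box n)ᶜ ∪ wedge ∩ (beyondRightEdge n 1 ∪ beyondRightEdge n (-1))

/-- The unbounded component, the hole left of `tooth 0`, and the upper (`true`) and lower
(`false`) hole between `tooth j` and `tooth (j + 1)`. -/
def hole (n : ℕ) : Option (Option (Fin n × Bool)) → Set (ℝ × ℝ)
  | none => outside n
  | some none => leftHole
  | some (some (j, b)) => gap j (if b then 1 else -1)

theorem leftEdge_combo (j : ℕ) (x y t : ℝ) :
    leftEdge j ((1 - t) * x + t * y) = (1 - t) * leftEdge j x + t * leftEdge j y := by
  simp only [leftEdge]
  ring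

theorem rightEdge_combo (j : ℕ) (x y t : ℝ) :
    rightEdge j ((1 - t) * x + t * y) = (1 - t) * rightEdge j x + t * rightEdge j y := by
  simp only [rightEdge]
  ring

theorem convex_wedge : Convex ℝ wedge := by
  intro p (hp : |p.2| < p.1 + 1) q (hq : |q.2| < q.1 + 1) u v hu hv huv
  have h := convex_Iio (0 : ℝ) (sub_neg.2 hp) (sub_neg.2 hq) hu hv huv
  simp only [mem_Iio, smul_eq_mul] at h
  show |u * p.2 + v * q.2| < u * p.1 + v * q.1 + 1
  calc |u * p.2 + v * q.2| ≤ u * |p.2| + v * |q.2| := by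
        simpa [abs_mul, abs_of_nonneg hu, abs_of_nonneg hv] using abs_add_le (u * p.2) (v * q.2)
    _ < u * p.1 + v * q.1 + 1 := by linarith

theorem convex_tooth (j : ℕ) : Convex ℝ (tooth j) :=
  (convex_setOf_abs_snd_le (leftEdge_combo j)).inter (convex_setOf_abs_snd_le (rightEdge_combo j))

theorem convex_jaw (n : ℕ) (s : ℝ) : Convex ℝ (jaw n s) := by
  rintro p ⟨hp₁, hp₂, hp₃⟩ q ⟨hq₁, hq₂, hq₃⟩ u v hu hv huv
  obtain rfl : u = 1 - v := by linarith
  refine ⟨?_, ?_, ?_⟩ <;>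
    simp only [Prod.fst_add, Prod.snd_add, Prod.smul_fst, Prod.smul_snd, smul_eq_mul] <;>
    nlinarith

theorem convex_wedge_inter_beyondLeftEdge (j : ℕ) (s : ℝ) :
    Convex ℝ (wedge ∩ beyondLeftEdge j s) :=
  convex_wedge.inter (convex_setOf_lt_mul_snd (leftEdge_combo j) s)

theorem convex_wedge_inter_beyondRightEdge (j : ℕ) (s : ℝ) :
    Convex ℝ (wedge ∩ beyondRightEdge j s) :=
  convex_wedge.inter (convex_setOf_lt_mul_snd (rightEdge_combo j) s)

theorem convex_gap (j : ℕ) (s : ℝ) : Convex ℝ (gap j s) :=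
  (convex_wedge_inter_beyondRightEdge j s).inter (convex_setOf_lt_mul_snd (leftEdge_combo _) s)

section Geometry

variable {p : ℝ × ℝ} {n i j : ℕ} {s : ℝ}

theorem fst_mem_Icc_of_mem_tooth (hp : p ∈ tooth j) : p.1 ∈ Icc (2 * j : ℝ) (2 * j + 2) := by
  obtain ⟨h₁, h₂⟩ := hp
  simp only [leftEdge, rightEdge] at h₁ h₂
  have := abs_nonneg p.2
  constructor <;> nlinarith [j.cast_nonneg (α := ℝ)]

theorem abs_snd_le_of_mem_tooth (hp : p ∈ tooth j) : |p.2| ≤ p.1 + 1 := by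
  obtain ⟨h₁, h₂⟩ := hp
  simp only [leftEdge, rightEdge] at h₁ h₂
  rcases le_total p.1 (2 * j + 1) with hx | hx <;> nlinarith [j.cast_nonneg (α := ℝ)]

theorem fst_lt_of_leftEdge_lt_abs (hw : p ∈ wedge) (h : leftEdge j p.1 < |p.2|) :
    p.1 < 2 * j + 1 := by
  have hw : |p.2| < p.1 + 1 := hw
  simp only [leftEdge] at h
  nlinarith [j.cast_nonneg (α := ℝ)]

theorem lt_fst_of_rightEdge_lt_abs (hw : p ∈ wedge) (h : rightEdge j p.1 < |p.2|) :
    2 * j + 1 < p.1 := by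
  have hw : |p.2| < p.1 + 1 := hw
  simp only [rightEdge] at h
  nlinarith [j.cast_nonneg (α := ℝ)]

theorem notMem_tooth_of_leftEdge_lt_abs (hw : p ∈ wedge) (h : leftEdge j p.1 < |p.2|)
    (hji : j ≤ i) : p ∉ tooth i := by
  intro hp
  rcases hji.eq_or_lt with rfl | hlt
  · exact (hp.1.trans_lt h).false
  · have : (j : ℝ) + 1 ≤ i := by exact_mod_cast hlt
    linarith [(fst_mem_Icc_of_mem_tooth hp).1, fst_lt_of_leftEdge_lt_abs hw h]

theorem notMem_tooth_of_rightEdge_lt_abs (hw : p ∈ wedge) (h : rightEdge j p.1 < |p.2|)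
    (hij : i ≤ j) : p ∉ tooth i := by
  intro hp
  rcases hij.eq_or_lt with rfl | hlt
  · exact (hp.2.trans_lt h).false
  · have : (i : ℝ) + 1 ≤ j := by exact_mod_cast hlt
    linarith [(fst_mem_Icc_of_mem_tooth hp).2, lt_fst_of_rightEdge_lt_abs hw h]

/- Left of the apex `x = 2j + 1` the wedge lies below the right edges of `tooth j`, and right of
it below the left edges, so only one constraint of `tooth j` can fail. -/
theorem leftEdge_lt_abs_of_notMem_tooth (hw : p ∈ wedge) (hx : p.1 ≤ 2 * j + 1)
    (hp : p ∉ tooth j) : leftEdge j p.1 < |p.2| := by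
  have hw : |p.2| < p.1 + 1 := hw
  by_contra h
  refine hp ⟨not_lt.1 h, ?_⟩
  simp only [rightEdge]
  nlinarith [j.cast_nonneg (α := ℝ)]

theorem rightEdge_lt_abs_of_notMem_tooth (hw : p ∈ wedge) (hx : 2 * j + 1 ≤ p.1)
    (hp : p ∉ tooth j) : rightEdge j p.1 < |p.2| := by
  have hw : |p.2| < p.1 + 1 := hw
  by_contra h
  refine hp ⟨?_, not_lt.1 h⟩
  simp only [leftEdge]
  nlinarith [j.cast_nonneg (α := ℝ)]

theorem notMem_jaw_of_mem_wedge (hs : |s| = 1) (hw : p ∈ wedge) : p ∉ jaw n s := fun hp => by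
  have hw : |p.2| < p.1 + 1 := hw
  linarith [hp.2.1, mul_le_abs_of_abs_eq_one hs p.2]

theorem jaw_subset_box (hs : |s| = 1) : jaw n s ⊆ box n := by
  rintro p ⟨h₁, h₂, h₃⟩
  have : |p.2| ≤ 2 * n + 3 := by
    rw [← one_mul |p.2|, ← hs, ← abs_mul, abs_le]
    constructor <;> linarith
  exact ⟨⟨h₁, by linarith⟩, abs_le.1 this⟩

theorem tooth_subset_box (hj : j ≤ n) : tooth j ⊆ box n := by
  intro p hp
  obtain ⟨h₁, h₂⟩ := fst_mem_Icc_of_mem_tooth hp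
  have h₃ := abs_snd_le_of_mem_tooth hp
  have : (j : ℝ) ≤ n := by exact_mod_cast hj
  exact ⟨⟨by linarith [j.cast_nonneg (α := ℝ)], by linarith⟩, abs_le.1 (by linarith)⟩

theorem mem_wedge_of_mem_box (hb : p ∈ box n) (h₁ : p ∉ jaw n 1) (h₂ : p ∉ jaw n (-1)) :
    p ∈ wedge := by
  obtain ⟨⟨hx, -⟩, hy₁, hy₂⟩ := hb
  show |p.2| < p.1 + 1
  by_contra h
  rcases le_abs.1 (not_lt.1 h) with h' | h'
  · exact h₁ ⟨hx, by linarith, by linarith⟩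
  · exact h₂ ⟨hx, by linarith, by linarith⟩

theorem mem_box_of_mem_wedge (hw : p ∈ wedge) (hx : p.1 ≤ 2 * n + 2) : p ∈ box n := by
  have hw : |p.2| < p.1 + 1 := hw
  exact ⟨⟨by linarith [abs_nonneg p.2], hx⟩, abs_le.1 (by linarith)⟩

theorem beyondLeftEdge_union (j : ℕ) :
    beyondLeftEdge j 1 ∪ beyondLeftEdge j (-1) = {p | leftEdge j p.1 < |p.2|} := by
  ext p
  simp [beyondLeftEdge, lt_abs]

theorem beyondRightEdge_union (j : ℕ) :
    beyondRightEdge j 1 ∪ beyondRightEdge j (-1) = {p | rightEdge j p.1 < |p.2|} := by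
  ext p
  simp [beyondRightEdge, lt_abs]

end Geometry

section Bodies

variable {n : ℕ} {s : ℝ}

theorem isCompact_box (n : ℕ) : IsCompact (box n) := isCompact_Icc.prod isCompact_Icc

theorem isConvexBody_jaw (hs : |s| = 1) : IsConvexBody (jaw n s) := by
  have hss : s * s = 1 := by rw [← abs_mul_abs_self, hs, one_mul]
  refine ⟨(isCompact_box n).of_isClosed_subset ?_ (jaw_subset_box hs), convex_jaw n s, ?_⟩
  · exact (isClosed_le (by fun_prop) (by fun_prop)).and
      ((isClosed_le (by fun_prop) (by fun_prop)).and (isClosed_le (by fun_prop) (by fun_prop)))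
  · have hopen : IsOpen {p : ℝ × ℝ | -1 < p.1 ∧ p.1 + 1 < s * p.2 ∧ s * p.2 < 2 * n + 3} :=
      (isOpen_lt (by fun_prop) (by fun_prop)).and
        ((isOpen_lt (by fun_prop) (by fun_prop)).and (isOpen_lt (by fun_prop) (by fun_prop)))
    refine ⟨(-1 / 2, s), interior_maximal (fun p hp => ?_) hopen ⟨by norm_num, ?_, ?_⟩⟩
    · exact ⟨hp.1.le, hp.2.1.le, hp.2.2.le⟩
    all_goals simp only [hss]; linarith [n.cast_nonneg (α := ℝ)]

theorem continuous_leftEdge (j : ℕ) : Continuous (leftEdge j) := by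
  unfold leftEdge
  fun_prop

theorem continuous_rightEdge (j : ℕ) : Continuous (rightEdge j) := by
  unfold rightEdge
  fun_prop

theorem isConvexBody_tooth (j : ℕ) : IsConvexBody (tooth j) := by
  have hl : Continuous fun p : ℝ × ℝ => leftEdge j p.1 :=
    (continuous_leftEdge j).comp continuous_fst
  have hr : Continuous fun p : ℝ × ℝ => rightEdge j p.1 :=
    (continuous_rightEdge j).comp continuous_fst
  refine ⟨(isCompact_box j).of_isClosed_subset ?_ (tooth_subset_box le_rfl), convex_tooth j, ?_⟩
  · exact (isClosed_le (by fun_prop) hl).and (isClosed_le (by fun_prop) hr)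
  · have hopen : IsOpen {p : ℝ × ℝ | |p.2| < leftEdge j p.1 ∧ |p.2| < rightEdge j p.1} :=
      (isOpen_lt (by fun_prop) hl).and (isOpen_lt (by fun_prop) hr)
    refine ⟨(2 * j + 1, 0), interior_maximal (fun p hp => ?_) hopen ?_⟩
    · exact ⟨hp.1.le, hp.2.le⟩
    constructor <;> simp only [leftEdge, rightEdge, abs_zero] <;> nlinarith [j.cast_nonneg (α := ℝ)]

theorem isConvexBody_body (n i : ℕ) : IsConvexBody (body n i) :=
  match i with
  | 0 => isConvexBody_jaw (by simp)
  | 1 => isConvexBody_jaw (by simp)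
  | j + 2 => isConvexBody_tooth j

theorem disjoint_interior_jaw_neg_one_jaw_one :
    Disjoint (interior (jaw n (-1))) (interior (jaw n 1)) :=
  disjoint_interior_of_subset_le_of_subset_ge (f := ContinuousLinearMap.snd ℝ ℝ ℝ) (c := 0)
    (fun r => ⟨(0, r), rfl⟩) (fun p hp => show p.2 ≤ 0 by linarith [hp.1, hp.2.1])
    (fun p hp => show 0 ≤ p.2 by linarith [hp.1, hp.2.1])

theorem disjoint_interior_tooth_jaw (hs : |s| = 1) (j : ℕ) :
    Disjoint (interior (tooth j)) (interior (jaw n s)) :=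
  disjoint_interior_of_subset_le_of_subset_ge
    (f := s • ContinuousLinearMap.snd ℝ ℝ ℝ - ContinuousLinearMap.fst ℝ ℝ ℝ) (c := 1)
    (fun r => ⟨(-r, 0), by simp⟩)
    (fun p hp => show s * p.2 - p.1 ≤ 1 by
      linarith [abs_snd_le_of_mem_tooth hp, mul_le_abs_of_abs_eq_one hs p.2])
    (fun p hp => show 1 ≤ s * p.2 - p.1 by linarith [hp.2.1])

theorem disjoint_interior_tooth_tooth {i j : ℕ} (hij : i < j) :
    Disjoint (interior (tooth i)) (interior (tooth j)) :=
  disjoint_interior_of_subset_le_of_subset_ge (f := ContinuousLinearMap.fst ℝ ℝ ℝ) (c := 2 * j)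
    (fun r => ⟨(r, 0), rfl⟩)
    (fun p hp => show p.1 ≤ 2 * j by
      have : (i : ℝ) + 1 ≤ j := by exact_mod_cast hij
      linarith [(fst_mem_Icc_of_mem_tooth hp).2])
    (fun p hp => (fst_mem_Icc_of_mem_tooth hp).1)

theorem pairwise_disjoint_interior_body (n : ℕ) :
    Pairwise (Disjoint on fun i => interior (body n i)) := by
  refine (pairwise_disjoint_on _).2 fun i j hij => ?_
  rcases i with _ | _ | i <;> rcases j with _ | _ | j
  all_goals first
    | omega
    | exact disjoint_interior_jaw_neg_one_jaw_one.symm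
    | exact (disjoint_interior_tooth_jaw (by simp) j).symm
    | exact disjoint_interior_tooth_tooth (by omega)

end Bodies

section Holes

variable {p : ℝ × ℝ} {n : ℕ}

theorem abs_ite_one_neg_one (b : Bool) : |(if b then 1 else -1 : ℝ)| = 1 := by
  cases b <;> simp

theorem isOpen_wedge : IsOpen wedge := isOpen_lt (by fun_prop) (by fun_prop)

theorem isOpen_beyondLeftEdge (j : ℕ) (s : ℝ) : IsOpen (beyondLeftEdge j s) :=
  isOpen_lt ((continuous_leftEdge j).comp continuous_fst) (by fun_prop)

theorem isOpen_beyondRightEdge (j : ℕ) (s : ℝ) : IsOpen (beyondRightEdge j s) :=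
  isOpen_lt ((continuous_rightEdge j).comp continuous_fst) (by fun_prop)

theorem isOpen_hole (n : ℕ) (h : Option (Option (Fin n × Bool))) : IsOpen (hole n h) := by
  rcases h with _ | _ | ⟨j, b⟩
  · exact (isCompact_box n).isClosed.isOpen_compl.union (isOpen_wedge.inter
      ((isOpen_beyondRightEdge n 1).union (isOpen_beyondRightEdge n (-1))))
  · exact isOpen_wedge.inter ((isOpen_beyondLeftEdge 0 1).union (isOpen_beyondLeftEdge 0 (-1)))
  · exact (isOpen_wedge.inter (isOpen_beyondRightEdge _ _)).inter (isOpen_beyondLeftEdge _ _)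

theorem isPreconnected_wedge_inter_union {A : ℝ → Set (ℝ × ℝ)}
    (hA : ∀ s, Convex ℝ (wedge ∩ A s)) {x : ℝ × ℝ} (hx₁ : x ∈ wedge ∩ A 1)
    (hx₂ : x ∈ wedge ∩ A (-1)) : IsPreconnected (wedge ∩ (A 1 ∪ A (-1))) := by
  rw [inter_union_distrib_left]
  exact IsPreconnected.union x hx₁ hx₂ (hA 1).isPreconnected (hA (-1)).isPreconnected

theorem isPreconnected_hole (n : ℕ) (h : Option (Option (Fin n × Bool))) :
    IsPreconnected (hole n h) := by
  rcases h with _ | _ | ⟨j, b⟩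
  · have hx : ((2 * n + 3 : ℝ), (0 : ℝ)) ∈
        wedge ∩ beyondRightEdge n 1 ∩ beyondRightEdge n (-1) := by
      refine ⟨⟨?_, ?_⟩, ?_⟩ <;>
        simp only [wedge, beyondRightEdge, rightEdge, mem_ofPred_eq, abs_zero, mul_zero] <;>
        nlinarith [n.cast_nonneg (α := ℝ)]
    refine IsPreconnected.union ((2 * n + 3 : ℝ), (0 : ℝ)) (fun hb => ?_) ⟨hx.1.1, Or.inl hx.1.2⟩ ?_
      (isPreconnected_wedge_inter_union (convex_wedge_inter_beyondRightEdge n) hx.1 ⟨hx.1.1, hx.2⟩)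
    · linarith [hb.1.2]
    · exact isPreconnected_compl_Icc_prod_Icc _ _ _ _
  · have hx : ((-1 / 2 : ℝ), (0 : ℝ)) ∈ wedge ∩ beyondLeftEdge 0 1 ∩ beyondLeftEdge 0 (-1) := by
      refine ⟨⟨?_, ?_⟩, ?_⟩ <;>
        simp only [wedge, beyondLeftEdge, leftEdge, mem_ofPred_eq, abs_zero, mul_zero] <;>
        norm_num
    exact isPreconnected_wedge_inter_union (convex_wedge_inter_beyondLeftEdge 0) hx.1 ⟨hx.1.1, hx.2⟩
  · exact (convex_gap _ _).isPreconnected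

theorem nonempty_hole (n : ℕ) (h : Option (Option (Fin n × Bool))) : (hole n h).Nonempty := by
  rcases h with _ | _ | ⟨j, b⟩
  · refine ⟨((2 * n + 3 : ℝ), (0 : ℝ)), Or.inl fun hb => ?_⟩
    linarith [hb.1.2]
  · refine ⟨((-1 / 2 : ℝ), (0 : ℝ)), ?_, Or.inl ?_⟩ <;>
      simp only [wedge, beyondLeftEdge, leftEdge, mem_ofPred_eq, abs_zero, mul_zero] <;>
      norm_num
  · set s : ℝ := if b then 1 else -1
    have hs : |s| = 1 := abs_ite_one_neg_one b
    have hss : s * s = 1 := by rw [← abs_mul_abs_self, hs, one_mul]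
    refine ⟨((2 * (j : ℕ) + 2 : ℝ), s), ⟨?_, ?_⟩, ?_⟩
    · show |s| < _
      linarith [(j : ℕ).cast_nonneg (α := ℝ)]
    · show rightEdge _ _ < s * s
      simp [rightEdge, hss]
    · show leftEdge _ _ < s * s
      simp only [leftEdge, hss]
      push_cast
      linarith

theorem fst_lt_one_of_mem_leftHole (hp : p ∈ leftHole) : p.1 < 1 := by
  obtain ⟨hw, hl⟩ := hp
  rw [beyondLeftEdge_union] at hl
  simpa using fst_lt_of_leftEdge_lt_abs hw hl

theorem fst_mem_Ioo_of_mem_gap {j : ℕ} {s : ℝ} (hs : |s| = 1) (hp : p ∈ gap j s) :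
    p.1 ∈ Ioo (2 * j + 1 : ℝ) (2 * j + 3) := by
  obtain ⟨⟨hw, hr⟩, hl⟩ := hp
  have := fst_lt_of_leftEdge_lt_abs hw (lt_of_lt_of_le hl (mul_le_abs_of_abs_eq_one hs _))
  push_cast at this
  exact ⟨lt_fst_of_rightEdge_lt_abs hw (lt_of_lt_of_le hr (mul_le_abs_of_abs_eq_one hs _)),
    by linarith⟩

theorem disjoint_outside {S : Set (ℝ × ℝ)} (hSw : S ⊆ wedge) (hSx : ∀ p ∈ S, p.1 < 2 * n + 1) :
    Disjoint (outside n) S := by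
  refine disjoint_left.2 ?_
  rintro p (hb | ⟨hw, hr⟩) hp
  · exact hb (mem_box_of_mem_wedge (hSw hp) (by linarith [hSx p hp]))
  · rw [beyondRightEdge_union] at hr
    linarith [lt_fst_of_rightEdge_lt_abs hw hr, hSx p hp]

theorem disjoint_outside_leftHole : Disjoint (outside n) leftHole :=
  disjoint_outside (fun _ hp => hp.1) fun p hp => by
    linarith [fst_lt_one_of_mem_leftHole hp, n.cast_nonneg (α := ℝ)]

theorem disjoint_outside_gap {j : ℕ} {s : ℝ} (hs : |s| = 1) (hj : j < n) :
    Disjoint (outside n) (gap j s) :=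
  disjoint_outside (fun _ hp => hp.1.1) fun p hp => by
    have : (j : ℝ) + 1 ≤ n := by exact_mod_cast hj
    linarith [(fst_mem_Ioo_of_mem_gap hs hp).2]

theorem disjoint_leftHole_gap {j : ℕ} {s : ℝ} (hs : |s| = 1) : Disjoint leftHole (gap j s) :=
  disjoint_left.2 fun p hp hp' => by
    linarith [fst_lt_one_of_mem_leftHole hp, (fst_mem_Ioo_of_mem_gap hs hp').1,
      j.cast_nonneg (α := ℝ)]

theorem disjoint_gap_gap {i j : ℕ} {s t : ℝ} (hs : |s| = 1) (ht : |t| = 1) (hij : i ≠ j) :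
    Disjoint (gap i s) (gap j t) := by
  refine disjoint_left.2 fun p hp hp' => ?_
  obtain ⟨hi₁, hi₂⟩ := fst_mem_Ioo_of_mem_gap hs hp
  obtain ⟨hj₁, hj₂⟩ := fst_mem_Ioo_of_mem_gap ht hp'
  rcases hij.lt_or_gt with h | h
  · have : (i : ℝ) + 1 ≤ j := by exact_mod_cast h
    linarith
  · have : (j : ℝ) + 1 ≤ i := by exact_mod_cast h
    linarith

theorem disjoint_gap_one_gap_neg_one (j : ℕ) : Disjoint (gap j 1) (gap j (-1)) := by
  refine disjoint_left.2 fun p ⟨⟨_, hr⟩, hl⟩ ⟨⟨_, hr'⟩, hl'⟩ => ?_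
  simp only [beyondLeftEdge, beyondRightEdge, leftEdge, rightEdge, mem_ofPred_eq] at hr hl hr' hl'
  push_cast at hl hl'
  rcases le_total p.1 (2 * j + 2) with hx | hx <;> nlinarith [j.cast_nonneg (α := ℝ)]

theorem pairwise_disjoint_hole (n : ℕ) : Pairwise (Disjoint on hole n) := by
  rintro (_ | _ | ⟨i, b⟩) (_ | _ | ⟨j, b'⟩) hne
  · exact absurd rfl hne
  · exact disjoint_outside_leftHole
  · exact disjoint_outside_gap (abs_ite_one_neg_one b') j.2
  · exact disjoint_outside_leftHole.symm
  · exact absurd rfl hne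
  · exact disjoint_leftHole_gap (abs_ite_one_neg_one b')
  · exact (disjoint_outside_gap (abs_ite_one_neg_one b) i.2).symm
  · exact (disjoint_leftHole_gap (abs_ite_one_neg_one b)).symm
  · by_cases hij : (i : ℕ) = j
    · obtain rfl := Fin.ext hij
      rcases b with _ | _ <;> rcases b' with _ | _
      · exact absurd rfl hne
      · exact (disjoint_gap_one_gap_neg_one i).symm
      · exact disjoint_gap_one_gap_neg_one i
      · exact absurd rfl hne
    · exact disjoint_gap_gap (abs_ite_one_neg_one b) (abs_ite_one_neg_one b') hij

theorem mem_iUnion_body :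
    p ∈ ⋃ i : Fin (n + 3), body n i ↔ p ∈ jaw n 1 ∨ p ∈ jaw n (-1) ∨ ∃ j ≤ n, p ∈ tooth j := by
  simp only [mem_iUnion]
  constructor
  · rintro ⟨⟨_ | _ | j, hj⟩, hp⟩
    · exact Or.inl hp
    · exact Or.inr (Or.inl hp)
    · exact Or.inr (Or.inr ⟨j, by omega, hp⟩)
  · rintro (hp | hp | ⟨j, hj, hp⟩)
    · exact ⟨0, hp⟩
    · exact ⟨1, hp⟩
    · exact ⟨⟨j + 2, by omega⟩, hp⟩

theorem notMem_iUnion_body_of_mem_wedge (hw : p ∈ wedge) (hteeth : ∀ j ≤ n, p ∉ tooth j) :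
    p ∉ ⋃ i : Fin (n + 3), body n i := by
  rw [mem_iUnion_body]
  rintro (hp | hp | ⟨j, hj, hp⟩)
  · exact notMem_jaw_of_mem_wedge (by simp) hw hp
  · exact notMem_jaw_of_mem_wedge (by simp) hw hp
  · exact hteeth j hj hp

theorem notMem_iUnion_body_of_notMem_box (hb : p ∉ box n) : p ∉ ⋃ i : Fin (n + 3), body n i := by
  rw [mem_iUnion_body]
  rintro (hp | hp | ⟨j, hj, hp⟩)
  · exact hb (jaw_subset_box (by simp) hp)
  · exact hb (jaw_subset_box (by simp) hp)
  · exact hb (tooth_subset_box hj hp)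

theorem hole_subset_compl (h : Option (Option (Fin n × Bool))) :
    hole n h ⊆ (⋃ i : Fin (n + 3), body n i)ᶜ := by
  rcases h with _ | _ | ⟨j, b⟩
  · rintro p (hb | ⟨hw, hr⟩)
    · exact notMem_iUnion_body_of_notMem_box hb
    · rw [beyondRightEdge_union] at hr
      exact notMem_iUnion_body_of_mem_wedge hw fun i hi => notMem_tooth_of_rightEdge_lt_abs hw hr hi
  · rintro p ⟨hw, hl⟩
    rw [beyondLeftEdge_union] at hl
    exact notMem_iUnion_body_of_mem_wedge hw fun i _ =>
      notMem_tooth_of_leftEdge_lt_abs hw hl (Nat.zero_le i)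
  · rintro p ⟨⟨hw, hr⟩, hl⟩
    have hs := mul_le_abs_of_abs_eq_one (abs_ite_one_neg_one b) p.2
    refine notMem_iUnion_body_of_mem_wedge hw fun i _ => ?_
    rcases le_or_gt i j with hij | hji
    · exact notMem_tooth_of_rightEdge_lt_abs hw (lt_of_lt_of_le hr hs) hij
    · exact notMem_tooth_of_leftEdge_lt_abs hw (lt_of_lt_of_le hl hs) hji

theorem mem_gap_of_lt_abs {j : ℕ} (hw : p ∈ wedge) (hr : rightEdge j p.1 < |p.2|)
    (hl : leftEdge (j + 1) p.1 < |p.2|) : p ∈ gap j 1 ∨ p ∈ gap j (-1) := by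
  rcases le_or_gt 0 p.2 with hy | hy
  · rw [abs_of_nonneg hy, ← one_mul p.2] at hr hl
    exact Or.inl ⟨⟨hw, hr⟩, hl⟩
  · rw [abs_of_neg hy, ← neg_one_mul] at hr hl
    exact Or.inr ⟨⟨hw, hr⟩, hl⟩

theorem exists_mem_hole (hp : p ∉ ⋃ i : Fin (n + 3), body n i) : ∃ h, p ∈ hole n h := by
  simp only [mem_iUnion_body, not_or, not_exists, not_and] at hp
  obtain ⟨h₁, h₂, hteeth⟩ := hp
  by_cases hb : p ∈ box n
  swap
  · exact ⟨none, Or.inl hb⟩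
  have hw := mem_wedge_of_mem_box hb h₁ h₂
  have hx : p.1 ≤ 2 * n + 2 := hb.1.2
  have hx' : -1 < p.1 := by linarith [abs_nonneg p.2, show |p.2| < p.1 + 1 from hw]
  -- `p` lies between the apices of `tooth (J - 1)` and `tooth J`.
  obtain ⟨J, hJ₁, hJ₂⟩ : ∃ J : ℕ, 2 * (J : ℝ) ≤ p.1 + 1 ∧ p.1 + 1 < 2 * J + 2 :=
    ⟨⌊(p.1 + 1) / 2⌋₊, by linarith [Nat.floor_le (by linarith : 0 ≤ (p.1 + 1) / 2)],
      by linarith [Nat.lt_floor_add_one ((p.1 + 1) / 2)]⟩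
  rcases J with _ | j
  · refine ⟨some none, hw, ?_⟩
    rw [beyondLeftEdge_union]
    exact leftEdge_lt_abs_of_notMem_tooth hw (by push_cast at hJ₂; linarith) (hteeth 0 n.zero_le)
  push_cast at hJ₁ hJ₂
  have hjn : j ≤ n := by
    have : (j : ℝ) < n + 1 := by linarith
    exact Nat.lt_succ_iff.1 (by exact_mod_cast this)
  have hr := rightEdge_lt_abs_of_notMem_tooth hw (by linarith) (hteeth j hjn)
  rcases hjn.lt_or_eq with hjn | rfl
  · have hl := leftEdge_lt_abs_of_notMem_tooth (j := j + 1) hw (by push_cast; linarith)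
      (hteeth (j + 1) hjn)
    rcases mem_gap_of_lt_abs hw hr hl with hg | hg
    · exact ⟨some (some (⟨j, hjn⟩, true)), hg⟩
    · exact ⟨some (some (⟨j, hjn⟩, false)), hg⟩
  · refine ⟨none, Or.inr ⟨hw, ?_⟩⟩
    rw [beyondRightEdge_union]
    exact hr

theorem compl_iUnion_body (n : ℕ) : (⋃ i : Fin (n + 3), body n i)ᶜ = ⋃ h, hole n h :=
  subset_antisymm (fun _ hp => mem_iUnion.2 (exists_mem_hole hp)) (iUnion_subset hole_subset_compl)

end Holes

end ConvexHoles

theorem convex_holes_lower_bound (m : ℕ) (hm : 3 ≤ m) :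
    ∃ Z : Fin m → Set (ℝ × ℝ),
      (∀ i, IsConvexBody (Z i)) ∧
      (∀ i j, i ≠ j → Disjoint (interior (Z i)) (interior (Z j))) ∧
      ({H : Set (ℝ × ℝ) | ∃ x ∈ (⋃ i, Z i)ᶜ,
          H = connectedComponentIn (⋃ i, Z i)ᶜ x}).Finite ∧
      ({H : Set (ℝ × ℝ) | ∃ x ∈ (⋃ i, Z i)ᶜ,
          H = connectedComponentIn (⋃ i, Z i)ᶜ x}).ncard = 2 * m - 4 := by
  obtain ⟨n, rfl⟩ : ∃ n, m = n + 3 := ⟨m - 3, by omega⟩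
  refine ⟨fun i => ConvexHoles.body n i, fun i => ConvexHoles.isConvexBody_body n i,
    fun i j hij => ConvexHoles.pairwise_disjoint_interior_body n (Fin.val_injective.ne hij), ?_⟩
  rw [ConvexHoles.compl_iUnion_body]
  obtain ⟨hfin, hcard⟩ := finite_and_ncard_setOf_connectedComponentIn_iUnion
    (ConvexHoles.isOpen_hole n) (ConvexHoles.isPreconnected_hole n) (ConvexHoles.nonempty_hole n)
    (ConvexHoles.pairwise_disjoint_hole n)
  refine ⟨hfin, hcard.trans ?_⟩
  simp only [Nat.card_eq_fintype_card, Fintype.card_option, Fintype.card_prod, Fintype.card_fin,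
    Fintype.card_bool]
  omega
end

section
/- For every integer m ≥ 1 there exist a nondegenerate closed axis-parallel rectangle C in ℝ² and pairwise-disjoint nondegenerate closed axis-parallel rectangles Z₁, …, Zₘ contained in C with the following property: for every natural number b and every family of pairwise interior-disjoint nondegenerate closed axis-parallel rectangles Z'₁, …, Z'_{m+b} whose union equals C and which satisfy Zᵢ ⊆ Z'ᵢ for every i ≤ m, one has b ≥ m − ⌈2√m − 1⌉. -/
/-- A nondegenerate closed axis-parallel rectangle in ℝ²:
a set of the form [a, b] × [c, d] with a < b and c < d. -/
def IsRect (S : Set (ℝ × ℝ)) : Prop :=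
  ∃ a b c d : ℝ, a < b ∧ c < d ∧ S = Set.Icc a b ×ˢ Set.Icc c d

/-
Lay out the `m` bricks in `p` rows of `q`, where `m ≤ p q` and `p + q - 1 < 2√m`, shifting row `r`
to the right by `r a` and column `k` down by `k c` and shrinking every brick slightly. At each of
the at least `m - p - q + 1` interior vertices of the grid the four surrounding bricks then form a
pinwheel around a small hole. A rectangle containing a point of the hole and missing the interiors
of the four bricks stays inside the hole, and a rectangle containing one of the four bricks and a
point of the hole overlaps the next brick of the pinwheel. Hence in any completion these points lie
in tiles other than the `m` enlarged bricks, and in pairwise distinct ones, so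
`b ≥ m - p - q + 1 ≥ m - ⌈2√m - 1⌉`.
-/

open Set Function

theorem le_or_le_of_disjoint_interior_Icc_prod_Icc {A B C D a b c d : ℝ} (hAB : A < B)
    (hCD : C < D) (hab : a < b) (hcd : c < d)
    (h : Disjoint (interior (Icc A B ×ˢ Icc C D)) (interior (Icc a b ×ˢ Icc c d))) :
    B ≤ a ∨ b ≤ A ∨ D ≤ c ∨ d ≤ C := by
  simp only [interior_prod_eq, interior_Icc, disjoint_prod, Ioo_disjoint_Ioo, min_le_iff,
    le_max_iff] at h
  rcases h with ((h | h) | h | h) | (h | h) | h | h <;> first | (exfalso; linarith) | tauto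

theorem disjoint_Icc_prod_Icc_of_lt {a b c d a' b' c' d' : ℝ} (h : b < a' ∨ d < c') :
    Disjoint (Icc a b ×ˢ Icc c d) (Icc a' b' ×ˢ Icc c' d') := by
  rw [Set.disjoint_left]
  rintro z ⟨⟨-, h1⟩, -, h2⟩ ⟨⟨h3, -⟩, h4, -⟩
  rcases h with h | h <;> linarith

theorem le_of_Icc_prod_Icc_subset {A B C D a b c d : ℝ} (hab : a ≤ b) (hcd : c ≤ d)
    (h : Icc a b ×ˢ Icc c d ⊆ Icc A B ×ˢ Icc C D) : A ≤ a ∧ b ≤ B ∧ C ≤ c ∧ d ≤ D := by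
  rw [Icc_prod_Icc, Icc_prod_Icc, Icc_subset_Icc_iff (Prod.mk_le_mk.2 ⟨hab, hcd⟩)] at h
  exact ⟨h.1.1, h.2.1, h.1.2, h.2.2⟩

theorem card_add_card_le_of_blocked {α β γ ι : Type*} [TopologicalSpace α] [Fintype β]
    [Fintype ι] (IsTile : Set α → Prop) (Z : β → Set α) (x : γ → α) (S : Finset γ)
    (blocked : ∀ R, IsTile R → ∀ u ∈ S, ∀ i, x u ∈ R → Z i ⊆ R →
      (∀ j ≠ i, Disjoint (interior R) (interior (Z j))) → False)
    (separated : ∀ R, IsTile R → ∀ u ∈ S, ∀ v ∈ S, x u ∈ R → x v ∈ R →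
      (∀ j, Disjoint (interior R) (interior (Z j))) → u = v)
    (K : ι → Set α) (hK : ∀ t, IsTile (K t))
    (hdisj : Pairwise (Disjoint on fun t => interior (K t)))
    (hcover : ∀ u ∈ S, x u ∈ ⋃ t, K t) (e : β → ι) (he : Injective e) (hZ : ∀ i, Z i ⊆ K (e i)) :
    Fintype.card β + S.card ≤ Fintype.card ι := by
  have clear : ∀ t j, t ≠ e j → Disjoint (interior (K t)) (interior (Z j)) := fun t j h =>
    (hdisj h).mono_right (interior_mono (hZ j))
  choose tile htile using fun u : S => mem_iUnion.1 (hcover u u.2)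
  have unmarked : ∀ i u, e i ≠ tile u := by
    rintro i u hi
    refine blocked _ (hK (e i)) u u.2 i (hi ▸ htile u) (hZ i) fun j hj => ?_
    exact clear _ _ (he.ne hj.symm)
  have separate : Injective tile := fun u v huv =>
    Subtype.ext <| separated _ (hK _) u u.2 v v.2 (htile u) (huv ▸ htile v)
      fun j => clear _ _ (unmarked j u).symm
  simpa using Fintype.card_le_of_injective _ (he.sumElim separate unmarked)

theorem mul_add_div_mod_of_lt {q r k : ℕ} (hk : k < q) :
    (q * r + k) / q = r ∧ (q * r + k) % q = k :=
  ⟨by rw [Nat.mul_add_div (by omega), Nat.div_eq_of_lt hk, add_zero],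
    by rw [Nat.mul_add_mod, Nat.mod_eq_of_lt hk]⟩

theorem add_two_mul_one_div_le_one {r p : ℕ} (h : r ≤ p) : ((r : ℝ) + 2) * (1 / (p + 2)) ≤ 1 := by
  rw [mul_one_div, div_le_one (by positivity)]
  exact_mod_cast Nat.add_le_add_right h 2

theorem one_div_add_two_le_half (p : ℕ) : 1 / ((p : ℝ) + 2) ≤ 1 / 2 :=
  one_div_le_one_div_of_le (by norm_num) (by linarith [(p.cast_nonneg : (0 : ℝ) ≤ p)])

theorem eq_of_natCast_lt_add_one {m n : ℕ} (h₁ : (m : ℝ) < n + 1) (h₂ : (n : ℝ) < m + 1) :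
    m = n := by
  have : m < n + 1 := by exact_mod_cast h₁
  have : n < m + 1 := by exact_mod_cast h₂
  omega

theorem exists_le_mul_add_sub_one_lt_two_mul_sqrt {m : ℕ} (hm : 1 ≤ m) :
    ∃ p q : ℕ, 0 < p ∧ 0 < q ∧ m ≤ p * q ∧ (p + q - 1 : ℝ) < 2 * √m := by
  have lt_two_mul_sqrt (n : ℕ) (h : n ^ 2 < 4 * m) : (n : ℝ) < 2 * √m := by
    refine lt_of_pow_lt_pow_left₀ 2 (by positivity) ?_
    rw [mul_pow, Real.sq_sqrt (Nat.cast_nonneg _)]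
    exact_mod_cast h
  obtain ⟨n, rfl⟩ : ∃ n, m = n + 1 := ⟨m - 1, by omega⟩
  set t := Nat.sqrt n
  have ht : t ^ 2 ≤ n := Nat.sqrt_le' n
  have ht' : n < (t + 1) ^ 2 := Nat.lt_succ_sqrt' n
  by_cases h : n + 1 ≤ t * (t + 1)
  · refine ⟨t, t + 1, Nat.pos_of_ne_zero fun h0 => by simp [h0] at h, by omega, h, ?_⟩
    have := lt_two_mul_sqrt (2 * t) (by nlinarith)
    push_cast at this ⊢
    linarith
  · refine ⟨t + 1, t + 1, by omega, by omega, by nlinarith, ?_⟩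
    have := lt_two_mul_sqrt (2 * t + 1) (by nlinarith)
    push_cast at this ⊢
    linarith

namespace RectCake

/-- The cell `[k, k + 1] × [r, r + 1]` moved right by `r a` and down by `k c`, with margins `a / 8`
and `c / 8` taken off its vertical and horizontal sides. -/
noncomputable def brick (a c : ℝ) (r k : ℕ) : Set (ℝ × ℝ) :=
  Icc (k + (r + 1/8) * a) (k + 1 + (r - 1/8) * a) ×ˢ
    Icc (r - (k - 1/8) * c) (r + 1 - (k + 1/8) * c)

def cake (p q : ℕ) : Set (ℝ × ℝ) :=
  Icc (0 : ℝ) (q + 1) ×ˢ Icc (-1 : ℝ) p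

/-- The centre of the hole enclosed by the bricks `(r, k)`, `(r, k + 1)`, `(r + 1, k)` and
`(r + 1, k + 1)`. -/
noncomputable def junction (a c : ℝ) (r k : ℕ) : ℝ × ℝ :=
  (k + 1 + (r + 1/2) * a, r + 1 - (k + 1/2) * c)

theorem isRect_brick {a c : ℝ} (ha : a < 4) (hc : c < 4) (r k : ℕ) : IsRect (brick a c r k) :=
  ⟨_, _, _, _, by linarith, by linarith, rfl⟩

theorem brick_subset {a c : ℝ} {p q r k : ℕ} (ha : 0 ≤ a) (hc : 0 ≤ c) (hr : r < p) (hk : k < q)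
    (hra : (r + 1) * a ≤ 1) (hkc : (k + 1) * c ≤ 1) :
    brick a c r k ⊆ cake p q := by
  have hr' : (r : ℝ) + 1 ≤ p := by exact_mod_cast hr
  have hk' : (k : ℝ) + 1 ≤ q := by exact_mod_cast hk
  have : 0 ≤ (r : ℝ) * a := by positivity
  have : 0 ≤ (k : ℝ) * c := by positivity
  rintro z ⟨⟨hx, hx'⟩, hy, hy'⟩
  exact ⟨⟨by linarith, by linarith⟩, by linarith, by linarith⟩

theorem disjoint_brick {a c : ℝ} {r k r' k' : ℕ} (ha : 0 < a) (hc : 0 < c) (hk' : k' * c ≤ 1)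
    (h : r < r' ∨ r = r' ∧ k < k') : Disjoint (brick a c r k) (brick a c r' k') := by
  have : 0 ≤ (k : ℝ) * c := by positivity
  apply disjoint_Icc_prod_Icc_of_lt
  rcases h with h | ⟨rfl, h⟩
  · obtain ⟨rfl, h'⟩ | ⟨rfl, h'⟩ | h' :
        r' = r + 1 ∧ k' ≤ k ∨ r' = r + 1 ∧ k < k' ∨ r + 2 ≤ r' := by omega
    · have : (k' : ℝ) * c ≤ k * c := by gcongr
      right; push_cast; linarith
    · have : (k : ℝ) + 1 ≤ k' := by exact_mod_cast h'
      left; push_cast; linarith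
    · have : (r : ℝ) + 2 ≤ r' := by exact_mod_cast h'
      right; linarith
  · have : (k : ℝ) + 1 ≤ k' := by exact_mod_cast h
    left; linarith

theorem junction_mem {a c : ℝ} {p q r k : ℕ} (ha : 0 ≤ a) (hc : 0 ≤ c) (hr : r < p)
    (hk : k < q) (hra : (r + 1) * a ≤ 1) (hkc : (k + 1) * c ≤ 1) :
    junction a c r k ∈ cake p q := by
  have hr' : (r : ℝ) + 1 ≤ p := by exact_mod_cast hr
  have hk' : (k : ℝ) + 1 ≤ q := by exact_mod_cast hk
  have : 0 ≤ (r : ℝ) * a := by positivity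
  have : 0 ≤ (k : ℝ) * c := by positivity
  simp only [cake, junction, mem_prod, mem_Icc]
  refine ⟨⟨?_, ?_⟩, ?_, ?_⟩ <;> linarith

section Pinwheel

variable {a c A B C D : ℝ} {r k : ℕ}

theorem junction_pinwheel (ha : 0 < a) (ha' : a ≤ 1/2) (hc : 0 < c) (hc' : c ≤ 1/2)
    (hAB : A < B) (hCD : C < D) (hP : junction a c r k ∈ Icc A B ×ˢ Icc C D) :
    (Disjoint (interior (Icc A B ×ˢ Icc C D)) (interior (brick a c (r + 1) k)) →
      D ≤ r + 1 - (k - 1/8) * c) ∧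
    (Disjoint (interior (Icc A B ×ˢ Icc C D)) (interior (brick a c (r + 1) (k + 1))) →
      B ≤ k + 1 + (r + 1 + 1/8) * a) ∧
    (Disjoint (interior (Icc A B ×ˢ Icc C D)) (interior (brick a c r (k + 1))) →
      r + 1 - (k + 1 + 1/8) * c ≤ C) ∧
    (Disjoint (interior (Icc A B ×ˢ Icc C D)) (interior (brick a c r k)) →
      k + 1 + (r - 1/8) * a ≤ A) := by
  obtain ⟨⟨hA, hB⟩, hC, hD⟩ := hP
  simp only [junction] at hA hB hC hD
  refine ⟨fun h => ?_, fun h => ?_, fun h => ?_, fun h => ?_⟩ <;>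
  · rcases le_or_le_of_disjoint_interior_Icc_prod_Icc hAB hCD (by linarith) (by linarith) h
      with h | h | h | h <;> push_cast at h <;> linarith

theorem junction_notMem_of_brick_subset (ha : 0 < a) (ha' : a ≤ 1/2) (hc : 0 < c)
    (hc' : c ≤ 1/2) (hAB : A < B) (hCD : C < D) {ρ κ : ℕ}
    (hZ : brick a c ρ κ ⊆ Icc A B ×ˢ Icc C D)
    (hclear : ∀ r' k', r ≤ r' → r' ≤ r + 1 → k ≤ k' → k' ≤ k + 1 → (r', k') ≠ (ρ, κ) →
      Disjoint (interior (Icc A B ×ˢ Icc C D)) (interior (brick a c r' k'))) :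
    junction a c r k ∉ Icc A B ×ˢ Icc C D := by
  intro hP
  obtain ⟨hN, hE, hS, hW⟩ := junction_pinwheel ha ha' hc hc' hAB hCD hP
  obtain ⟨hAZ, hBZ, hCZ, hDZ⟩ :=
    le_of_Icc_prod_Icc_subset (by linarith) (by linarith) hZ
  -- A box holding one of the four bricks misses the next one counterclockwise, which overlaps
  -- the held brick in the relevant projection.
  by_cases hN' : (ρ, κ) = (r + 1, k)
  · obtain ⟨rfl, rfl⟩ := Prod.mk.inj hN'
    have := hW (hclear _ _ le_rfl (by omega) le_rfl (by omega) (by simp))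
    push_cast at hAZ; linarith
  by_cases hE' : (ρ, κ) = (r + 1, k + 1)
  · obtain ⟨rfl, rfl⟩ := Prod.mk.inj hE'
    have := hN (hclear _ _ (by omega) le_rfl le_rfl (by omega) (by simp))
    push_cast at hDZ; linarith
  by_cases hS' : (ρ, κ) = (r, k + 1)
  · obtain ⟨rfl, rfl⟩ := Prod.mk.inj hS'
    have := hE (hclear _ _ (by omega) le_rfl (by omega) le_rfl (by simp))
    push_cast at hBZ; linarith
  by_cases hW' : (ρ, κ) = (r, k)
  · obtain ⟨rfl, rfl⟩ := Prod.mk.inj hW'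
    have := hS (hclear _ _ le_rfl (by omega) (by omega) le_rfl (by simp))
    linarith
  -- Otherwise the box lies in the hole, which is narrower than a brick.
  have := hE (hclear _ _ (by omega) le_rfl (by omega) le_rfl (Ne.symm hE'))
  have := hW (hclear _ _ le_rfl (by omega) le_rfl (by omega) (Ne.symm hW'))
  linarith

theorem eq_of_junction_mem (ha : 0 < a) (ha' : a ≤ 1/2) (hc : 0 < c) (hc' : c ≤ 1/2)
    (hAB : A < B) (hCD : C < D) {r' k' : ℕ} (hra : (r + 2) * a ≤ 1) (hra' : (r' + 2) * a ≤ 1)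
    (hclear : ∀ r'' k'', r ≤ r'' → r'' ≤ r + 1 → k ≤ k'' → k'' ≤ k + 1 →
      Disjoint (interior (Icc A B ×ˢ Icc C D)) (interior (brick a c r'' k'')))
    (hP : junction a c r k ∈ Icc A B ×ˢ Icc C D)
    (hP' : junction a c r' k' ∈ Icc A B ×ˢ Icc C D) : r = r' ∧ k = k' := by
  obtain ⟨hN, hE, hS, hW⟩ := junction_pinwheel ha ha' hc hc' hAB hCD hP
  have hN := hN (hclear _ _ (by omega) le_rfl le_rfl (by omega))
  have hE := hE (hclear _ _ (by omega) le_rfl (by omega) le_rfl)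
  have hS := hS (hclear _ _ le_rfl (by omega) (by omega) le_rfl)
  have hW := hW (hclear _ _ le_rfl (by omega) le_rfl (by omega))
  obtain ⟨⟨hA, hB⟩, hC, hD⟩ := hP'
  simp only [junction] at hA hB hC hD
  have : 0 ≤ (r : ℝ) * a := by positivity
  have : 0 ≤ (r' : ℝ) * a := by positivity
  obtain rfl : k = k' := eq_of_natCast_lt_add_one (by linarith) (by linarith)
  exact ⟨eq_of_natCast_lt_add_one (by linarith) (by linarith), rfl⟩

end Pinwheel

noncomputable def cakeBrick (p q u : ℕ) : Set (ℝ × ℝ) :=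
  brick (1 / (p + 2)) (1 / (q + 2)) (u / q) (u % q)

/-- The hole at the lower left corner of brick `u`, for `u` off the bottom row and the leftmost
column. -/
noncomputable def cakeJunction (p q u : ℕ) : ℝ × ℝ :=
  junction (1 / (p + 2)) (1 / (q + 2)) (u / q - 1) (u % q - 1)

def junctionIndices (m q : ℕ) : Finset ℕ :=
  (Finset.range m).filter fun u => q ≤ u ∧ u % q ≠ 0

theorem le_card_junctionIndices_add {m p q : ℕ} (hp : 0 < p) (hq : 0 < q) (hm : m ≤ p * q) :
    m + 1 ≤ (junctionIndices m q).card + p + q := by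
  have hrest : (Finset.range m).filter (fun u => ¬(q ≤ u ∧ u % q ≠ 0)) ⊆
      Finset.range q ∪ (Finset.range p).image (· * q) := by
    intro u hu
    simp only [Finset.mem_filter, Finset.mem_range, not_and, not_not] at hu
    simp only [Finset.mem_union, Finset.mem_range, Finset.mem_image]
    by_cases h : u < q
    · exact Or.inl h
    · exact Or.inr ⟨u / q, (Nat.div_lt_iff_lt_mul hq).2 (by linarith),
        Nat.div_mul_cancel (Nat.dvd_of_mod_eq_zero (hu.2 (by omega)))⟩
  have hcorner : 1 ≤ (Finset.range q ∩ (Finset.range p).image (· * q)).card :=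
    Finset.card_pos.2 ⟨0, Finset.mem_inter.2 ⟨Finset.mem_range.2 hq,
      Finset.mem_image.2 ⟨0, Finset.mem_range.2 hp, zero_mul q⟩⟩⟩
  have h₁ := Finset.card_union_add_card_inter (Finset.range q) ((Finset.range p).image (· * q))
  have h₂ := Finset.card_image_le (s := Finset.range p) (f := (· * q))
  have h₃ := Finset.card_le_card hrest
  have h₄ := Finset.card_filter_add_card_filter_not (s := Finset.range m)
    (fun u => q ≤ u ∧ u % q ≠ 0)
  rw [Finset.card_range] at h₁ h₂ h₄
  rw [junctionIndices]
  omega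

section Configuration

variable {m p q : ℕ}

theorem cakeBrick_mul_add {r k : ℕ} (hk : k < q) :
    cakeBrick p q (q * r + k) = brick (1 / (p + 2)) (1 / (q + 2)) r k := by
  rw [cakeBrick, (mul_add_div_mod_of_lt hk).1, (mul_add_div_mod_of_lt hk).2]

theorem cakeJunction_mul_add {r k : ℕ} (hk : k + 1 < q) :
    cakeJunction p q (q * (r + 1) + (k + 1)) = junction (1 / (p + 2)) (1 / (q + 2)) r k := by
  rw [cakeJunction, (mul_add_div_mod_of_lt hk).1, (mul_add_div_mod_of_lt hk).2,
    Nat.add_sub_cancel, Nat.add_sub_cancel]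

theorem exists_of_mem_junctionIndices (hq : 0 < q) {u : ℕ} (hu : u ∈ junctionIndices m q) :
    ∃ r k, k + 1 < q ∧ q * (r + 1) + (k + 1) = u ∧ u < m := by
  simp only [junctionIndices, Finset.mem_filter, Finset.mem_range] at hu
  obtain ⟨r, hr⟩ : ∃ r, u / q = r + 1 := ⟨u / q - 1, by have := Nat.div_pos hu.2.1 hq; omega⟩
  exact ⟨r, u % q - 1, by have := Nat.mod_lt u hq; omega,
    by rw [← hr, Nat.sub_add_cancel (by omega), Nat.div_add_mod], hu.1⟩

theorem isRect_cakeBrick (p q u : ℕ) : IsRect (cakeBrick p q u) :=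
  isRect_brick (by linarith [one_div_add_two_le_half p]) (by linarith [one_div_add_two_le_half q])
    _ _

theorem cakeBrick_subset (hq : 0 < q) (hm : m ≤ p * q) {u : ℕ} (hu : u < m) :
    cakeBrick p q u ⊆ cake p q := by
  have hr : u / q < p := (Nat.div_lt_iff_lt_mul hq).2 (by linarith)
  have hk : u % q < q := Nat.mod_lt u hq
  have := add_two_mul_one_div_le_one hr.le
  have := add_two_mul_one_div_le_one hk.le
  have : 0 < 1 / ((p : ℝ) + 2) := by positivity
  have : 0 < 1 / ((q : ℝ) + 2) := by positivity
  exact brick_subset (by positivity) (by positivity) hr hk (by linarith) (by linarith)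

theorem disjoint_cakeBrick (hq : 0 < q) {u v : ℕ} (huv : u < v) :
    Disjoint (cakeBrick p q u) (cakeBrick p q v) := by
  have hlex : u / q < v / q ∨ u / q = v / q ∧ u % q < v % q := by
    rcases (Nat.div_le_div_right (c := q) huv.le).lt_or_eq with h | h
    · exact Or.inl h
    · have := Nat.div_add_mod u q
      have := Nat.div_add_mod v q
      rw [h] at *
      exact Or.inr ⟨rfl, by omega⟩
  have := add_two_mul_one_div_le_one (Nat.mod_lt v hq).le
  have : 0 < 1 / ((q : ℝ) + 2) := by positivity
  exact disjoint_brick (by positivity) this (by linarith) hlex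

theorem cakeJunction_mem (hq : 0 < q) (hm : m ≤ p * q) {u : ℕ} (hu : u ∈ junctionIndices m q) :
    cakeJunction p q u ∈ cake p q := by
  obtain ⟨r, k, hk, rfl, hu⟩ := exists_of_mem_junctionIndices hq hu
  have hr : r + 1 < p := Nat.lt_of_mul_lt_mul_left (a := q) (by linarith [Nat.mul_comm p q])
  have := add_two_mul_one_div_le_one (show r ≤ p by omega)
  have := add_two_mul_one_div_le_one (show k ≤ q by omega)
  have : 0 < 1 / ((p : ℝ) + 2) := by positivity
  have : 0 < 1 / ((q : ℝ) + 2) := by positivity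
  rw [cakeJunction_mul_add hk]
  exact junction_mem (by positivity) (by positivity) (by omega) (by omega) (by linarith)
    (by linarith)

theorem cakeJunction_notMem (hq : 0 < q) {A B C D : ℝ} (hAB : A < B) (hCD : C < D) {u : ℕ}
    (hu : u ∈ junctionIndices m q) (i : Fin m) (hZ : cakeBrick p q i ⊆ Icc A B ×ˢ Icc C D)
    (hclear : ∀ j : Fin m, j ≠ i →
      Disjoint (interior (Icc A B ×ˢ Icc C D)) (interior (cakeBrick p q j))) :
    cakeJunction p q u ∉ Icc A B ×ˢ Icc C D := by
  obtain ⟨r, k, hk, rfl, hu⟩ := exists_of_mem_junctionIndices hq hu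
  rw [cakeJunction_mul_add hk]
  refine junction_notMem_of_brick_subset (by positivity) (one_div_add_two_le_half p)
    (by positivity) (one_div_add_two_le_half q) hAB hCD hZ fun r' k' _ hr'le _ hk'le hne => ?_
  have hk' : k' < q := by omega
  have hj : q * r' + k' < m := by nlinarith
  rw [← cakeBrick_mul_add hk']
  refine hclear ⟨q * r' + k', hj⟩ fun h => hne ?_
  rw [← h, (mul_add_div_mod_of_lt hk').1, (mul_add_div_mod_of_lt hk').2]

theorem eq_of_cakeJunction_mem (hq : 0 < q) (hm : m ≤ p * q) {A B C D : ℝ} (hAB : A < B)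
    (hCD : C < D) {u v : ℕ} (hu : u ∈ junctionIndices m q) (hv : v ∈ junctionIndices m q)
    (hclear : ∀ j : Fin m, Disjoint (interior (Icc A B ×ˢ Icc C D)) (interior (cakeBrick p q j)))
    (hPu : cakeJunction p q u ∈ Icc A B ×ˢ Icc C D)
    (hPv : cakeJunction p q v ∈ Icc A B ×ˢ Icc C D) : u = v := by
  obtain ⟨r, k, hk, rfl, hu⟩ := exists_of_mem_junctionIndices hq hu
  obtain ⟨r', k', hk', rfl, hv⟩ := exists_of_mem_junctionIndices hq hv
  have hr : r + 1 < p := Nat.lt_of_mul_lt_mul_left (a := q) (by linarith [Nat.mul_comm p q])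
  have hr' : r' + 1 < p := Nat.lt_of_mul_lt_mul_left (a := q) (by linarith [Nat.mul_comm p q])
  rw [cakeJunction_mul_add hk] at hPu
  rw [cakeJunction_mul_add hk'] at hPv
  have hclear' : ∀ r'' k'', r ≤ r'' → r'' ≤ r + 1 → k ≤ k'' → k'' ≤ k + 1 →
      Disjoint (interior (Icc A B ×ˢ Icc C D))
        (interior (brick (1 / (p + 2)) (1 / (q + 2)) r'' k'')) := by
    intro r'' k'' _ hr'' _ hk''
    rw [← cakeBrick_mul_add (by omega : k'' < q)]
    exact hclear ⟨q * r'' + k'', by nlinarith⟩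
  obtain ⟨rfl, rfl⟩ := eq_of_junction_mem (by positivity) (one_div_add_two_le_half p)
    (by positivity) (one_div_add_two_le_half q) hAB hCD
    (add_two_mul_one_div_le_one (by omega)) (add_two_mul_one_div_le_one (by omega)) hclear' hPu hPv
  rfl

end Configuration

theorem exists_rect_cake_of_le_mul {m : ℕ} (p q : ℕ) (hp : 0 < p) (hq : 0 < q) (hm : m ≤ p * q) :
    ∃ (C : Set (ℝ × ℝ)) (Z : Fin m → Set (ℝ × ℝ)),
      IsRect C ∧ (∀ i, IsRect (Z i)) ∧ (∀ i, Z i ⊆ C) ∧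
      (∀ i j, i ≠ j → Disjoint (Z i) (Z j)) ∧
      ∀ (b : ℕ) (Z' : Fin (m + b) → Set (ℝ × ℝ)),
        (∀ i, IsRect (Z' i)) →
        (∀ i j, i ≠ j → Disjoint (interior (Z' i)) (interior (Z' j))) →
        (⋃ i, Z' i) = C →
        (∀ i : Fin m, Z i ⊆ Z' (Fin.castAdd b i)) →
        m + 1 ≤ b + p + q := by
  refine ⟨cake p q, fun i => cakeBrick p q i,
    ⟨0, q + 1, -1, p, by positivity, by linarith [(p.cast_nonneg : (0 : ℝ) ≤ p)], rfl⟩,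
    fun i => isRect_cakeBrick p q i, fun i => cakeBrick_subset hq hm i.2,
    fun i j hij => ?_, fun b Z' hrect hdisj hcover hsub => ?_⟩
  · rcases lt_or_gt_of_ne (Fin.val_ne_of_ne hij) with h | h
    · exact disjoint_cakeBrick hq h
    · exact (disjoint_cakeBrick hq h).symm
  have hcard := card_add_card_le_of_blocked IsRect (fun i : Fin m => cakeBrick p q i)
    (cakeJunction p q) (junctionIndices m q)
    (by
      rintro R ⟨A, B, C, D, hAB, hCD, rfl⟩ u hu i hPu hZ hclear
      exact cakeJunction_notMem hq hAB hCD hu i hZ hclear hPu)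
    (by
      rintro R ⟨A, B, C, D, hAB, hCD, rfl⟩ u hu v hv hPu hPv hclear
      exact eq_of_cakeJunction_mem hq hm hAB hCD hu hv hclear hPu hPv)
    Z' hrect (fun i j => hdisj i j) (fun u hu => hcover ▸ cakeJunction_mem hq hm hu)
    (Fin.castAdd b) (Fin.castAdd_injective m b) hsub
  rw [Fintype.card_fin, Fintype.card_fin] at hcard
  have := le_card_junctionIndices_add hp hq hm
  omega

end RectCake

theorem rect_cake_lower_bound (m : ℕ) (hm : 1 ≤ m) :
    ∃ (C : Set (ℝ × ℝ)) (Z : Fin m → Set (ℝ × ℝ)),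
      IsRect C ∧
      (∀ i, IsRect (Z i)) ∧
      (∀ i, Z i ⊆ C) ∧
      (∀ i j, i ≠ j → Disjoint (Z i) (Z j)) ∧
      ∀ (b : ℕ) (Z' : Fin (m + b) → Set (ℝ × ℝ)),
        (∀ i, IsRect (Z' i)) →
        (∀ i j, i ≠ j → Disjoint (interior (Z' i)) (interior (Z' j))) →
        (⋃ i, Z' i) = C →
        (∀ i : Fin m, Z i ⊆ Z' (Fin.castAdd b i)) →
        (m : ℤ) - ⌈2 * Real.sqrt m - 1⌉ ≤ (b : ℤ) := by
  obtain ⟨p, q, hp, hq, hpq, hsqrt⟩ := exists_le_mul_add_sub_one_lt_two_mul_sqrt hm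
  obtain ⟨C, Z, hC, hZ, hZC, hZdisj, hbound⟩ := RectCake.exists_rect_cake_of_le_mul p q hp hq hpq
  refine ⟨C, Z, hC, hZ, hZC, hZdisj, fun b Z' hrect hdisj hcover hsub => ?_⟩
  have hb := hbound b Z' hrect hdisj hcover hsub
  have hceil : (p + q : ℤ) - 2 < ⌈2 * √m - 1⌉ := Int.lt_ceil.2 (by push_cast; linarith)
  omega
end

section
/- Let C be a nondegenerate closed axis-parallel rectangle in ℝ², let m ≥ 1, and let R₁, …, Rₘ be nondegenerate closed axis-parallel rectangles that are pairwise interior-disjoint and whose union equals C. Then the set of points p ∈ ℝ² that belong to at least 4 of the rectangles R₁, …, Rₘ is finite and has at most m − ⌈2√m − 1⌉ elements. -/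
/-!
Send each 4-vertex `p` to the tile whose lower-left corner is `p`. The four tiles at `p` fill the
four quadrants around `p`, so that tile has a tile below it with the same left edge line and a tile
to its left with the same bottom edge line: it is neither the lowest tile of its column nor the
leftmost tile of its row. Looking at the quadrants around the lower-left corner of a tile in the
interior of `C` shows that only the tile at the lower-left corner of `C` is both. Lower-left
corners are distinct, so `m ≤ |A| |B|` for the sets `A` of column-lowest and `B` of row-leftmost
tiles, and there are at most `m - |A ∪ B| ≤ m + 1 - |A| - |B| ≤ m + 1 - 2√m` 4-vertices.
-/

open Set Filter Topology Function

lemma IsRect.exists_eq_Icc {S : Set (ℝ × ℝ)} (h : IsRect S) :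
    ∃ lo hi : ℝ × ℝ, lo.1 < hi.1 ∧ lo.2 < hi.2 ∧ S = Icc lo hi := by
  obtain ⟨a, b, c, d, hab, hcd, rfl⟩ := h
  exact ⟨(a, c), (b, d), hab, hcd, (Icc_prod_eq (a, c) (b, d)).symm⟩

lemma interior_Icc_prod (lo hi : ℝ × ℝ) :
    interior (Icc lo hi) = Ioo lo.1 hi.1 ×ˢ Ioo lo.2 hi.2 := by
  rw [Icc_prod_eq, interior_prod_eq, interior_Icc, interior_Icc]

/-- `x ∈ sideInterval s u v` iff `x ∈ [u, v]` and `[u, v]` extends beyond `x` to the right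
(`s = true`) or to the left (`s = false`). -/
def sideInterval : Bool → ℝ → ℝ → Set ℝ
  | true, u, v => Ico u v
  | false, u, v => Ioc u v

lemma sideInterval_subset_Icc (s : Bool) (u v : ℝ) : sideInterval s u v ⊆ Icc u v := by
  cases s
  exacts [Ioc_subset_Icc_self, Ico_subset_Icc_self]

lemma max_lt_min_of_mem_sideInterval {s : Bool} {u v u' v' x : ℝ}
    (h : x ∈ sideInterval s u v) (h' : x ∈ sideInterval s u' v') : max u u' < min v v' := by
  cases s
  · exact (max_lt h.1 h'.1).trans_le (le_min h.2 h'.2)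
  · exact (max_le h.1 h'.1).trans_lt (lt_min h.2 h'.2)

lemma mem_sideInterval_decide {u v x : ℝ} (huv : u < v) (hx : x ∈ Icc u v) :
    x ∈ sideInterval (decide (x < v)) u v := by
  by_cases h : x < v
  · rw [decide_eq_true h]
    exact ⟨hx.1, h⟩
  · rw [decide_eq_false h]
    exact ⟨huv.trans_le (not_lt.1 h), hx.2⟩

lemma mem_sideInterval_of_shift {s : Bool} {u v x δ : ℝ} (hδ : 0 < δ) (hx : x ∈ Icc u v)
    (hshift : (if s then x + δ else x - δ) ∈ Icc u v) : x ∈ sideInterval s u v := by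
  cases s
  · simp only [Bool.false_eq_true, ↓reduceIte, mem_Icc] at hshift
    exact ⟨by linarith [hshift.1], hx.2⟩
  · simp only [↓reduceIte, mem_Icc] at hshift
    exact ⟨hx.1, by linarith [hshift.2]⟩

/-- The rectangle `Icc lo hi` contains the points of the open quadrant at `p` in direction
`(s, t)` near `p`. -/
def Occupies (lo hi p : ℝ × ℝ) (s t : Bool) : Prop :=
  p ∈ sideInterval s lo.1 hi.1 ×ˢ sideInterval t lo.2 hi.2

lemma Occupies.not_disjoint {lo hi lo' hi' p : ℝ × ℝ} {s t : Bool} (h : Occupies lo hi p s t)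
    (h' : Occupies lo' hi' p s t) : ¬Disjoint (interior (Icc lo hi)) (interior (Icc lo' hi')) := by
  rw [interior_Icc_prod, interior_Icc_prod, Set.disjoint_prod, Ioo_disjoint_Ioo, Ioo_disjoint_Ioo,
    not_or, not_le, not_le]
  exact ⟨max_lt_min_of_mem_sideInterval h.1 h'.1, max_lt_min_of_mem_sideInterval h.2 h'.2⟩

lemma occupies_decide {lo hi p : ℝ × ℝ} (hx : lo.1 < hi.1) (hy : lo.2 < hi.2)
    (hp : p ∈ Icc lo hi) : Occupies lo hi p (decide (p.1 < hi.1)) (decide (p.2 < hi.2)) := by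
  rw [Icc_prod_eq] at hp
  exact ⟨mem_sideInterval_decide hx hp.1, mem_sideInterval_decide hy hp.2⟩

lemma occupies_self {lo hi : ℝ × ℝ} (hx : lo.1 < hi.1) (hy : lo.2 < hi.2) :
    Occupies lo hi lo true true :=
  ⟨⟨le_rfl, hx⟩, le_rfl, hy⟩

lemma eventually_exists_mem_of_iUnion_mem_nhds {ι X : Type*} [Finite ι] [TopologicalSpace X]
    {R : ι → Set X} (hR : ∀ i, IsClosed (R i)) {p : X} (h : ⋃ i, R i ∈ 𝓝 p) :
    ∀ᶠ q in 𝓝 p, ∃ i, p ∈ R i ∧ q ∈ R i := by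
  have hfar : ∀ᶠ q in 𝓝 p, ∀ i, p ∉ R i → q ∉ R i := by
    refine eventually_all.2 fun i => ?_
    by_cases hp : p ∈ R i
    · exact Eventually.of_forall fun _ h => absurd hp h
    · filter_upwards [(hR i).isOpen_compl.mem_nhds hp] with q hq _ using hq
  filter_upwards [h, hfar] with q hq hfar
  obtain ⟨i, hi⟩ := mem_iUnion.1 hq
  exact ⟨i, not_not.1 fun hp => hfar i hp hi, hi⟩

section Tiling

variable {ι : Type*} {lo hi : ι → ℝ × ℝ}

/-- Columns and rows are the lines through the lower-left corners `lo i`. -/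
def IsLowestInColumn (lo : ι → ℝ × ℝ) (i : ι) : Prop :=
  ∀ j, (lo j).1 = (lo i).1 → (lo i).2 ≤ (lo j).2

def IsLeftmostInRow (lo : ι → ℝ × ℝ) (i : ι) : Prop :=
  ∀ j, (lo j).2 = (lo i).2 → (lo i).1 ≤ (lo j).1

lemma exists_isLowestInColumn [Finite ι] (lo : ι → ℝ × ℝ) (i : ι) :
    ∃ j, IsLowestInColumn lo j ∧ (lo j).1 = (lo i).1 := by
  obtain ⟨j, hj, hmin⟩ :=
    exists_min_image {j | (lo j).1 = (lo i).1} (fun j => (lo j).2) (toFinite _) ⟨i, rfl⟩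
  exact ⟨j, fun k hk => hmin k (hk.trans hj), hj⟩

lemma exists_isLeftmostInRow [Finite ι] (lo : ι → ℝ × ℝ) (i : ι) :
    ∃ j, IsLeftmostInRow lo j ∧ (lo j).2 = (lo i).2 := by
  obtain ⟨j, hj, hmin⟩ :=
    exists_min_image {j | (lo j).2 = (lo i).2} (fun j => (lo j).1) (toFinite _) ⟨i, rfl⟩
  exact ⟨j, fun k hk => hmin k (hk.trans hj), hj⟩

lemma card_le_ncard_isLowestInColumn_mul [Finite ι] (hlo : Injective lo) :
    Nat.card ι ≤ {i | IsLowestInColumn lo i}.ncard * {i | IsLeftmostInRow lo i}.ncard := by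
  choose col hcol hcol_eq using exists_isLowestInColumn lo
  choose row hrow hrow_eq using exists_isLeftmostInRow lo
  rw [← ncard_univ, ← ncard_prod]
  refine ncard_le_ncard_of_injOn (fun i => (col i, row i)) (fun i _ => ⟨hcol i, hrow i⟩) ?_
  intro i _ j _ h
  simp only [Prod.mk.injEq] at h
  exact hlo (Prod.ext (by rw [← hcol_eq, h.1, hcol_eq]) (by rw [← hrow_eq, h.2, hrow_eq]))

lemma exists_occupies_of_iUnion_mem_nhds [Finite ι] {p : ℝ × ℝ}
    (h : ⋃ i, Icc (lo i) (hi i) ∈ 𝓝 p) (s t : Bool) :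
    ∃ i, Occupies (lo i) (hi i) p s t := by
  obtain ⟨ε, hε, hnear⟩ := Metric.eventually_nhds_iff.1
    (eventually_exists_mem_of_iUnion_mem_nhds (fun _ => isClosed_Icc) h)
  set q : ℝ × ℝ :=
    (if s then p.1 + ε / 2 else p.1 - ε / 2, if t then p.2 + ε / 2 else p.2 - ε / 2)
  have hq : dist q p < ε := by
    cases s <;> cases t <;>
      simpa [q, Prod.dist_eq, Real.dist_eq, abs_of_pos hε] using half_lt_self hε
  obtain ⟨i, hp, hqi⟩ := hnear hq
  rw [Icc_prod_eq] at hp hqi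
  exact ⟨i, mem_sideInterval_of_shift (half_pos hε) hp.1 hqi.1,
    mem_sideInterval_of_shift (half_pos hε) hp.2 hqi.2⟩

structure IsBoxPacking (lo hi : ι → ℝ × ℝ) : Prop where
  fst_lt : ∀ i, (lo i).1 < (hi i).1
  snd_lt : ∀ i, (lo i).2 < (hi i).2
  pairwise_disjoint : Pairwise (Disjoint on fun i => interior (Icc (lo i) (hi i)))

namespace IsBoxPacking

lemma eq_of_occupies (h : IsBoxPacking lo hi) {p : ℝ × ℝ} {s t : Bool} {i j : ι}
    (hoi : Occupies (lo i) (hi i) p s t)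
    (hoj : Occupies (lo j) (hi j) p s t) : i = j :=
  by_contra fun hij => hoi.not_disjoint hoj (h.pairwise_disjoint hij)

lemma occupies_lo (h : IsBoxPacking lo hi) (i : ι) : Occupies (lo i) (hi i) (lo i) true true :=
  occupies_self (h.fst_lt i) (h.snd_lt i)

lemma injective_lo (h : IsBoxPacking lo hi) : Injective lo := fun i j hij =>
  h.eq_of_occupies (h.occupies_lo i) (hij ▸ h.occupies_lo j)

lemma exists_occupies_only_of_four_le [Finite ι] (h : IsBoxPacking lo hi) {p : ℝ × ℝ}
    (hp : 4 ≤ {i | p ∈ Icc (lo i) (hi i)}.ncard) (s t : Bool) :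
    ∃ i, Occupies (lo i) (hi i) p s t ∧
      ∀ s' t', Occupies (lo i) (hi i) p s' t' → (s', t') = (s, t) := by
  set S := {i | p ∈ Icc (lo i) (hi i)}
  -- `i` occupies the quadrant `ψ i`; as `|S| ≥ 4`, `ψ` is a bijection from `S` onto quadrants
  let ψ : ι → Bool × Bool := fun i => (decide (p.1 < (hi i).1), decide (p.2 < (hi i).2))
  have hψ : ∀ i ∈ S, ∀ {s t}, ψ i = (s, t) → Occupies (lo i) (hi i) p s t := by
    rintro i hiS s t hst
    simp only [ψ, Prod.mk.injEq] at hst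
    rw [← hst.1, ← hst.2]
    exact occupies_decide (h.fst_lt i) (h.snd_lt i) hiS
  have hinj : InjOn ψ S := fun i hiS j hjS hij =>
    h.eq_of_occupies (hψ i hiS rfl) (hψ j hjS hij.symm)
  have hsurj : ψ '' S = univ := by
    refine eq_of_subset_of_ncard_le (subset_univ _) ?_
    rw [hinj.ncard_image, ncard_univ]
    simpa using hp
  obtain ⟨i, hiS, hψi⟩ : (s, t) ∈ ψ '' S := hsurj ▸ mem_univ _
  refine ⟨i, hψ i hiS hψi, fun s' t' h' => ?_⟩
  obtain ⟨j, hjS, hψj⟩ : (s', t') ∈ ψ '' S := hsurj ▸ mem_univ _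
  rw [← hψi, ← hψj, h.eq_of_occupies (hψ j hjS hψj) h']

lemma exists_lo_eq_of_four_le [Finite ι] (h : IsBoxPacking lo hi) {p : ℝ × ℝ}
    (hp : 4 ≤ {i | p ∈ Icc (lo i) (hi i)}.ncard) :
    ∃ i, lo i = p ∧ ¬IsLowestInColumn lo i ∧ ¬IsLeftmostInRow lo i := by
  have hq := h.exists_occupies_only_of_four_le hp
  obtain ⟨i, ⟨⟨hi₁, hi₁'⟩, hi₂, hi₂'⟩, honly_i⟩ := hq true true
  obtain ⟨j, ⟨⟨hj₁, hj₁'⟩, hj₂, hj₂'⟩, honly_j⟩ := hq true false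
  obtain ⟨k, ⟨⟨hk₁, hk₁'⟩, hk₂, hk₂'⟩, honly_k⟩ := hq false true
  have hi₁ : (lo i).1 = p.1 := hi₁.eq_of_not_lt fun hlt => by
    simpa using honly_i false true ⟨⟨hlt, hi₁'.le⟩, hi₂, hi₂'⟩
  have hi₂ : (lo i).2 = p.2 := hi₂.eq_of_not_lt fun hlt => by
    simpa using honly_i true false ⟨⟨hi₁.le, hi₁'⟩, hlt, hi₂'.le⟩
  have hj₁ : (lo j).1 = p.1 := hj₁.eq_of_not_lt fun hlt => by
    simpa using honly_j false false ⟨⟨hlt, hj₁'.le⟩, hj₂, hj₂'⟩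
  have hk₂ : (lo k).2 = p.2 := hk₂.eq_of_not_lt fun hlt => by
    simpa using honly_k false false ⟨⟨hk₁, hk₁'⟩, hlt, hk₂'.le⟩
  refine ⟨i, Prod.ext hi₁ hi₂, fun hcol => ?_, fun hrow => ?_⟩
  · exact (hi₂ ▸ hj₂).not_ge (hcol j (hj₁.trans hi₁.symm))
  · exact (hi₁ ▸ hk₁).not_ge (hrow k (hk₂.trans hi₂.symm))

lemma not_isLowestInColumn_or_not_isLeftmostInRow (h : IsBoxPacking lo hi) {i : ι}
    (hcov : ∀ s t, ∃ j, Occupies (lo j) (hi j) (lo i) s t) :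
    ¬IsLowestInColumn lo i ∨ ¬IsLeftmostInRow lo i := by
  obtain ⟨j, ⟨⟨hj₁, hj₁'⟩, hj₂, hj₂'⟩⟩ := hcov true false
  rcases hj₁.eq_or_lt with hj₁ | hj₁
  · exact Or.inl fun hcol => hj₂.not_ge (hcol j hj₁)
  obtain ⟨k, ⟨⟨hk₁, hk₁'⟩, hk₂, hk₂'⟩⟩ := hcov false true
  rcases hk₂.eq_or_lt with hk₂ | hk₂
  · exact Or.inr fun hrow => hk₁.not_ge (hrow k hk₂)
  -- now `j` and `k` both occupy the lower-left quadrant, so `j` reaches all four, as `i` does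
  have hj : Occupies (lo j) (hi j) (lo i) false false := ⟨⟨hj₁, hj₁'.le⟩, hj₂, hj₂'⟩
  obtain rfl : j = k := h.eq_of_occupies hj ⟨⟨hk₁, hk₁'⟩, hk₂, hk₂'.le⟩
  have hj' : Occupies (lo j) (hi j) (lo i) true true :=
    ⟨⟨hj₁.le, hj₁'⟩, hj₂.le, hk₂'⟩
  obtain rfl : j = i := h.eq_of_occupies hj' (h.occupies_lo i)
  exact absurd hj₂ (lt_irrefl _)

lemma lo_eq_of_isLowestInColumn_of_isLeftmostInRow [Finite ι] (h : IsBoxPacking lo hi)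
    {a b : ℝ × ℝ} (hcover : ⋃ i, Icc (lo i) (hi i) = Icc a b) {i : ι}
    (hcol : IsLowestInColumn lo i) (hrow : IsLeftmostInRow lo i) : lo i = a := by
  have hle : ∀ j, lo j ≤ hi j := fun j => ⟨(h.fst_lt j).le, (h.snd_lt j).le⟩
  have hsub : ∀ j, a ≤ lo j ∧ hi j ≤ b := fun j => by
    have hj : Icc (lo j) (hi j) ⊆ Icc a b :=
      hcover ▸ subset_iUnion (fun j => Icc (lo j) (hi j)) j
    exact ⟨(hj (left_mem_Icc.2 (hle j))).1, (hj (right_mem_Icc.2 (hle j))).2⟩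
  obtain ⟨i₀, hi₀⟩ :=
    mem_iUnion.1 (hcover ▸ left_mem_Icc.2 ((hsub i).1.trans ((hle i).trans (hsub i).2)))
  have hlo₀ : lo i₀ = a := le_antisymm hi₀.1 (hsub i₀).1
  obtain ⟨ha₁, ha₂⟩ := (hsub i).1
  rcases ha₁.eq_or_lt with h₁ | h₁
  · exact Prod.ext h₁.symm (le_antisymm (hlo₀ ▸ hcol i₀ (by rw [hlo₀, h₁])) ha₂)
  rcases ha₂.eq_or_lt with h₂ | h₂
  · exact Prod.ext (le_antisymm (hlo₀ ▸ hrow i₀ (by rw [hlo₀, h₂])) ha₁) h₂.symm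
  have hint : lo i ∈ interior (Icc a b) := by
    rw [interior_Icc_prod]
    exact ⟨⟨h₁, (h.fst_lt i).trans_le (hsub i).2.1⟩,
      h₂, (h.snd_lt i).trans_le (hsub i).2.2⟩
  have hcov := exists_occupies_of_iUnion_mem_nhds (hcover ▸ mem_interior_iff_mem_nhds.1 hint)
  exact ((h.not_isLowestInColumn_or_not_isLeftmostInRow hcov).elim (· hcol) (· hrow)).elim

end IsBoxPacking

end Tiling

lemma ncard_compl_union_add_ncard_add_ncard_le {α : Type*} [Finite α] {s t : Set α}
    (h : (s ∩ t).ncard ≤ 1) : (s ∪ t)ᶜ.ncard + s.ncard + t.ncard ≤ Nat.card α + 1 := by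
  have := ncard_add_ncard_compl (s ∪ t)
  have := ncard_union_add_ncard_inter s t
  omega

lemma le_sub_ceil_two_sqrt_sub_one {x a b m : ℕ} (hsum : x + a + b ≤ m + 1) (hm : m ≤ a * b) :
    (x : ℤ) ≤ m - ⌈2 * Real.sqrt m - 1⌉ := by
  have hm' : (m : ℝ) ≤ a * b := by exact_mod_cast hm
  have hsqrt : 2 * Real.sqrt m ≤ a + b := by
    nlinarith [Real.sq_sqrt (Nat.cast_nonneg (α := ℝ) m), Real.sqrt_nonneg m,
      sq_nonneg ((a : ℝ) - b)]
  have : ⌈2 * Real.sqrt m - 1⌉ ≤ (a : ℤ) + b - 1 := Int.ceil_le.2 (by push_cast; linarith)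
  omega

theorem four_vertices_upper_bound (C : Set (ℝ × ℝ)) (hC : IsRect C)
    (m : ℕ) (R : Fin m → Set (ℝ × ℝ)) (hR : ∀ i, IsRect (R i))
    (hdisj : ∀ i j, i ≠ j → Disjoint (interior (R i)) (interior (R j)))
    (hcover : (⋃ i, R i) = C) :
    ({p : ℝ × ℝ | 4 ≤ {i : Fin m | p ∈ R i}.ncard}).Finite ∧
    (({p : ℝ × ℝ | 4 ≤ {i : Fin m | p ∈ R i}.ncard}).ncard : ℤ) ≤
      (m : ℤ) - ⌈2 * Real.sqrt m - 1⌉ := by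
  obtain ⟨a, b, -, -, rfl⟩ := hC.exists_eq_Icc
  choose lo hi hx hy hR using fun i => (hR i).exists_eq_Icc
  obtain rfl : R = fun i => Icc (lo i) (hi i) := funext hR
  beta_reduce
  have hP : IsBoxPacking lo hi := ⟨hx, hy, fun i j => hdisj i j⟩
  set A := {i | IsLowestInColumn lo i}
  set B := {i | IsLeftmostInRow lo i}
  have hX : {p | 4 ≤ {i | p ∈ Icc (lo i) (hi i)}.ncard} ⊆ lo '' (A ∪ B)ᶜ := by
    intro p hp
    obtain ⟨i, rfl, hcol, hrow⟩ := hP.exists_lo_eq_of_four_le hp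
    exact ⟨i, by simp [A, B, hcol, hrow], rfl⟩
  have hAB : (A ∩ B).ncard ≤ 1 := by
    refine (ncard_le_one (toFinite _)).2 fun i hiAB j hjAB => hP.injective_lo ?_
    rw [hP.lo_eq_of_isLowestInColumn_of_isLeftmostInRow hcover hiAB.1 hiAB.2,
      hP.lo_eq_of_isLowestInColumn_of_isLeftmostInRow hcover hjAB.1 hjAB.2]
  refine ⟨(toFinite _).subset hX,
    le_sub_ceil_two_sqrt_sub_one (a := A.ncard) (b := B.ncard) ?_ ?_⟩
  · have := (ncard_le_ncard hX).trans ncard_image_le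
    have := ncard_compl_union_add_ncard_add_ncard_le hAB
    simp only [Nat.card_eq_fintype_card, Fintype.card_fin] at this
    omega
  · simpa using card_le_ncard_isLowestInColumn_mul hP.injective_lo
end
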